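/- arXiv:2305.19277 — 2 statements merged into one kernel-verified Lean document; each statement's English description precedes it below -/
import Mathlib

section
/- Let G be a starlike graph with clique partition (V_0, V_1, …, V_t). Then every m-convexly independent set S of G satisfies |S| ≤ max over i ∈ {0, 1, …, t} of (|X_i| + d_c(G_i)). -/
open SimpleGraph

variable {V : Type*}

/-- The closed neighborhood of a vertex. -/
def closedNbhd (G : SimpleGraph V) (v : V) : Set V := insert v (G.neighborSet v)

/-- A vertex is simplicial if its closed neighborhood induces a complete graph. -/
def IsSimplicial (G : SimpleGraph V) (v : V) : Prop :=
  ∀ a ∈ closedNbhd G v, ∀ b ∈ closedNbhd G v, a ≠ b → G.Adj a b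

/-- `Z`, the set of simplicial vertices of `G`. -/
def simplicialSet (G : SimpleGraph V) : Set V := {v | IsSimplicial G v}

/-- `N(T)`, the union of open neighborhoods of vertices of `T`. -/
def nbhdSet (G : SimpleGraph V) (T : Set V) : Set V := ⋃ v ∈ T, G.neighborSet v

/-- An independent set of vertices. -/
def IsIndepSet' (G : SimpleGraph V) (T : Set V) : Prop :=
  ∀ u ∈ T, ∀ v ∈ T, ¬ G.Adj u v

/-- The difference `d(T) = |T| - |N(T)|` of a set of vertices. -/
noncomputable def indepDiff (G : SimpleGraph V) (T : Set V) : ℤ :=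
  (T.ncard : ℤ) - ((nbhdSet G T).ncard : ℤ)

/-- The critical independence difference `d_c(G)`. -/
noncomputable def critIndepDiff (G : SimpleGraph V) : ℤ :=
  sSup {d : ℤ | ∃ T : Set V, IsIndepSet' G T ∧ d = indepDiff G T}

/-- A walk is an induced path if it is a path and no two non-consecutive vertices
of it are adjacent. -/
def IsInducedPath (G : SimpleGraph V) {a b : V} (p : G.Walk a b) : Prop :=
  p.IsPath ∧ ∀ (i j : ℕ) (hi : i < p.support.length) (hj : j < p.support.length),
    i + 1 < j → ¬ G.Adj (p.support.get ⟨i, hi⟩) (p.support.get ⟨j, hj⟩)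

/-- A set is monophonically convex if it contains every vertex of every induced path
joining two of its vertices. -/
def MonoConvex (G : SimpleGraph V) (S : Set V) : Prop :=
  ∀ ⦃a b : V⦄, a ∈ S → b ∈ S → ∀ p : G.Walk a b, IsInducedPath G p →
    ∀ w ∈ p.support, w ∈ S

/-- The monophonic convex hull of `S`: the smallest monophonically convex set containing `S`. -/
def monoHull (G : SimpleGraph V) (S : Set V) : Set V :=
  ⋂₀ {T : Set V | S ⊆ T ∧ MonoConvex G T}

/-- A set is monophonically convexly independent if no member is in the hull
of the others. -/
def MConvexIndep (G : SimpleGraph V) (S : Set V) : Prop :=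
  ∀ v ∈ S, v ∉ monoHull G (S \ {v})

/-- The monophonic rank: the largest size of an m-convexly independent set. -/
noncomputable def monoRank (G : SimpleGraph V) : ℕ :=
  sSup {n : ℕ | ∃ S : Set V, MConvexIndep G S ∧ n = S.ncard}

/-- A starlike partition of a graph: a partition of the vertex set into cliques
`V_0, V_1, …, V_t` such that `V_0` is a maximal clique and, for `i ≥ 1`,
all vertices of `V_i` have the same closed neighborhood outside `V_i`,
contained in `V_0`. -/
structure IsStarlikePartition (G : SimpleGraph V) (t : ℕ) (Vp : Fin (t+1) → Set V) : Prop where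
  nonempty : ∀ i, (Vp i).Nonempty
  disjoint : ∀ i j, i ≠ j → Disjoint (Vp i) (Vp j)
  covers : ∀ v : V, ∃ i, v ∈ Vp i
  cliques : ∀ i, G.IsClique (Vp i)
  maximal : ∀ T : Set V, G.IsClique T → Vp 0 ⊆ T → T ⊆ Vp 0
  nbhd_eq : ∀ i : Fin (t+1), i ≠ 0 → ∀ u ∈ Vp i, ∀ v ∈ Vp i,
    closedNbhd G u \ Vp i = closedNbhd G v \ Vp i
  nbhd_sub : ∀ i : Fin (t+1), i ≠ 0 → ∀ u ∈ Vp i, closedNbhd G u \ Vp i ⊆ Vp 0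

/-- `X_i`: the maximal clique containing `V_i` (`X_0 = V_0`; for `i ≥ 1` it is
the closed neighborhood of any vertex of `V_i`). -/
def Xset (G : SimpleGraph V) {t : ℕ} (Vp : Fin (t+1) → Set V) (i : Fin (t+1)) : Set V :=
  if i = 0 then Vp 0 else ⋃ u ∈ Vp i, closedNbhd G u

/-- `C_i = X_i ∩ Z`. -/
def Cset (G : SimpleGraph V) {t : ℕ} (Vp : Fin (t+1) → Set V) (i : Fin (t+1)) : Set V :=
  Xset G Vp i ∩ simplicialSet G

/-- `C'_i = X_i − C_i`. -/
def Cset' (G : SimpleGraph V) {t : ℕ} (Vp : Fin (t+1) → Set V) (i : Fin (t+1)) : Set V :=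
  Xset G Vp i \ Cset G Vp i

/-- `Y_i`: the union of the sets `C_j`, over `j ≠ i` with `C'_j ⊆ C'_i`. -/
def Yset (G : SimpleGraph V) {t : ℕ} (Vp : Fin (t+1) → Set V) (i : Fin (t+1)) : Set V :=
  ⋃ j ∈ {j : Fin (t+1) | j ≠ i ∧ Cset' G Vp j ⊆ Cset' G Vp i}, Cset G Vp j

open scoped Classical in
/-- The vertex set of the split graph `G_i`: if `|N(Y_i) − Y_i| = |C'_i| − 1` and
`|Y_i| ≥ |C'_i| − 1` then `(C'_i − {x}) ∪ Y_i` where `{x} = C'_i − N(Y_i)`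
(so that `C'_i − {x} = C'_i ∩ N(Y_i)`), otherwise `C'_i ∪ Y_i`. -/
noncomputable def Wset (G : SimpleGraph V) {t : ℕ} (Vp : Fin (t+1) → Set V)
    (i : Fin (t+1)) : Set V :=
  if (((nbhdSet G (Yset G Vp i) \ Yset G Vp i).ncard : ℤ) = ((Cset' G Vp i).ncard : ℤ) - 1
      ∧ ((Yset G Vp i).ncard : ℤ) ≥ ((Cset' G Vp i).ncard : ℤ) - 1)
  then (Cset' G Vp i ∩ nbhdSet G (Yset G Vp i)) ∪ Yset G Vp i
  else Cset' G Vp i ∪ Yset G Vp i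

/-- The induced subgraph on `W` with all edges inside `Y` deleted. -/
def inducedMinusY (G : SimpleGraph V) (W Y : Set V) : SimpleGraph ↥W where
  Adj a b := G.Adj a b ∧ ¬((a : V) ∈ Y ∧ (b : V) ∈ Y)
  symm := by
    constructor
    intro a b h
    exact ⟨h.1.symm, fun hc => h.2 ⟨hc.2, hc.1⟩⟩
  loopless := by
    constructor
    intro a h
    exact h.1.ne rfl

/-- The split graph `G_i = G[W_i] − E(G[Y_i])`. -/
noncomputable def Gsplit (G : SimpleGraph V) {t : ℕ} (Vp : Fin (t+1) → Set V)
    (i : Fin (t+1)) : SimpleGraph ↥(Wset G Vp i) :=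
  inducedMinusY G (Wset G Vp i) (Yset G Vp i)


/-!
Let `T` be the set of vertices of `S − V_0` with no neighbour in `S ∩ V_0`. Since `S` is
m-convexly independent, no vertex of `S` is an inner vertex of an induced path between two other
vertices of `S`; applied to paths with three and four vertices, this places `S − T` inside one
maximal clique `X_i` and `T` inside `Y_i`. If no vertex of `S − V_0` sees `S ∩ V_0`, take `i = 0`.
Otherwise some `e ∈ S − V_0` sees `S ∩ V_0`, and `i` is the index of its part: `S ∩ V_0` and
`S − (V_0 ∪ T)` lie in `N[e] = X_i`, and for `q ∈ T ∩ V_m` and `y ∈ C'_m ⊆ V_0` the excluded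
induced path `e - p - y - q` (`p ∈ S ∩ V_0`) gives `y ∈ N[e]`, so `C'_m ⊆ C'_i`.

Now `T` is independent in `G_i`, and its neighbourhood there lies in `C'_i ⊆ V_0`, hence misses
`S − T`. So `S − T` and `N_{G_i}(T)` are disjoint subsets of `X_i`, and
`|S| ≤ |X_i| + d(T) ≤ |X_i| + d_c(G_i)`.
-/

namespace MConvexIndep

variable {G : SimpleGraph V} {S : Set V}

theorem notMem_support (hS : MConvexIndep G S) {a b v : V} (hv : v ∈ S) (ha : a ∈ S)
    (hb : b ∈ S) (hav : a ≠ v) (hbv : b ≠ v) (p : G.Walk a b) (hp : IsInducedPath G p) :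
    v ∉ p.support := fun hsup =>
  hS v hv (Set.mem_sInter.2 fun _ hT => hT.2 (hT.1 ⟨ha, hav⟩) (hT.1 ⟨hb, hbv⟩) p hp v hsup)

theorem adj_of_adj_adj (hS : MConvexIndep G S) {a v b : V} (ha : a ∈ S) (hv : v ∈ S)
    (hb : b ∈ S) (hab : a ≠ b) (hav : G.Adj a v) (hvb : G.Adj v b) : G.Adj a b := by
  by_contra hn
  refine hS.notMem_support hv ha hb hav.ne hvb.ne.symm (.cons hav (.cons hvb .nil))
    ⟨?_, ?_⟩ (by simp)
  · simp [Walk.isPath_def, hav.ne, hvb.ne, hab]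
  · intro i j hi hj hij
    simp only [Walk.support_cons, Walk.support_nil, List.length_cons, List.length_nil] at hi hj
    obtain ⟨rfl, rfl⟩ : i = 0 ∧ j = 2 := by omega
    simpa using hn

theorem adj_of_adj_adj_adj (hS : MConvexIndep G S) {a b c d : V} (ha : a ∈ S) (hb : b ∈ S)
    (hd : d ∈ S) (hac : a ≠ c) (had : a ≠ d) (hbd : b ≠ d)
    (hab' : G.Adj a b) (hbc' : G.Adj b c) (hcd' : G.Adj c d)
    (had' : ¬ G.Adj a d) (hbd' : ¬ G.Adj b d) : G.Adj a c := by
  by_contra hac'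
  refine hS.notMem_support hb ha hd hab'.ne hbd.symm (.cons hab' (.cons hbc' (.cons hcd' .nil)))
    ⟨?_, ?_⟩ (by simp)
  · simp [Walk.isPath_def, hab'.ne, hbc'.ne, hcd'.ne, hac, had, hbd]
  · intro i j hi hj hij
    simp only [Walk.support_cons, Walk.support_nil, List.length_cons, List.length_nil] at hi hj
    obtain ⟨rfl, rfl⟩ | ⟨rfl, rfl⟩ | ⟨rfl, rfl⟩ :
        (i = 0 ∧ j = 2) ∨ (i = 0 ∧ j = 3) ∨ (i = 1 ∧ j = 3) := by omega
    · simpa using hac'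
    · simpa using had'
    · simpa using hbd'

end MConvexIndep

theorem mem_closedNbhd_iff {G : SimpleGraph V} {u x : V} :
    x ∈ closedNbhd G u ↔ x = u ∨ G.Adj u x := by
  simp [closedNbhd, SimpleGraph.mem_neighborSet]

theorem indepDiff_le_critIndepDiff {α : Type*} [Finite α] (H : SimpleGraph α) {T : Set α}
    (hT : IsIndepSet' H T) : indepDiff H T ≤ critIndepDiff H := by
  refine le_csSup ⟨Nat.card α, ?_⟩ ⟨T, hT, rfl⟩
  rintro _ ⟨U, -, rfl⟩
  have := Set.ncard_le_card U
  unfold indepDiff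
  omega

def detachedPart (G : SimpleGraph V) (S A : Set V) : Set V :=
  {q ∈ S \ A | ∀ p ∈ S ∩ A, ¬ G.Adj q p}

theorem diff_detachedPart_subset {G : SimpleGraph V} {S A : Set V}
    (h : ∀ e ∈ S \ A, ∀ p ∈ S ∩ A, ¬ G.Adj e p) : S \ detachedPart G S A ⊆ A := by
  rintro s ⟨hs, hsT⟩
  by_contra hsA
  exact hsT ⟨⟨hs, hsA⟩, h s ⟨hs, hsA⟩⟩

section Splitting

variable {G : SimpleGraph V} {t : ℕ} {Vp : Fin (t+1) → Set V}

theorem Xset_zero : Xset G Vp 0 = Vp 0 := if_pos rfl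

theorem Cset'_subset_Xset (i : Fin (t+1)) : Cset' G Vp i ⊆ Xset G Vp i := Set.sdiff_subset

theorem Yset_subset_Wset (i : Fin (t+1)) : Yset G Vp i ⊆ Wset G Vp i := by
  unfold Wset
  split_ifs <;> exact Set.subset_union_right

theorem Wset_diff_Yset_subset (i : Fin (t+1)) : Wset G Vp i \ Yset G Vp i ⊆ Cset' G Vp i := by
  unfold Wset
  split_ifs
  · rintro x ⟨hx | hx, hxY⟩
    exacts [hx.1, absurd hx hxY]
  · rintro x ⟨hx | hx, hxY⟩
    exacts [hx, absurd hx hxY]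

theorem ncard_le_Xset_add_critIndepDiff [Finite V] {S T : Set V} {i : Fin (t+1)}
    (hT : T ⊆ Yset G Vp i) (hST : S \ T ⊆ Xset G Vp i)
    (hTS : ∀ q ∈ T, ∀ w ∈ S ∩ Cset' G Vp i, ¬ G.Adj q w) :
    (S.ncard : ℤ) ≤ (Xset G Vp i).ncard + critIndepDiff (Gsplit G Vp i) := by
  set T' : Set (Wset G Vp i) := Subtype.val ⁻¹' T
  set N : Set V := Subtype.val '' nbhdSet (Gsplit G Vp i) T'
  have hT'indep : IsIndepSet' (Gsplit G Vp i) T' := fun u hu v hv huv => huv.2 ⟨hT hu, hT hv⟩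
  have hT' : T'.ncard = T.ncard := by
    rw [← Set.ncard_image_of_injective _ Subtype.val_injective, Subtype.image_preimage_coe,
      Set.inter_eq_self_of_subset_right (hT.trans (Yset_subset_Wset i))]
  have hN : N.ncard = (nbhdSet (Gsplit G Vp i) T').ncard :=
    Set.ncard_image_of_injective _ Subtype.val_injective
  -- edges inside `Y_i` are deleted in `G_i`, so `N` avoids `Y_i` and hence lies in `C'_i`
  have hNC : N ⊆ Cset' G Vp i := by
    rintro _ ⟨w, hw, rfl⟩
    obtain ⟨v, hv, hvw⟩ := Set.mem_iUnion₂.mp hw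
    exact Wset_diff_Yset_subset i ⟨w.2, fun hwY => hvw.2 ⟨hT hv, hwY⟩⟩
  have hNS : Disjoint (S \ T) N := by
    rw [Set.disjoint_right]
    rintro _ ⟨w, hw, rfl⟩ hwS
    obtain ⟨v, hv, hvw⟩ := Set.mem_iUnion₂.mp hw
    exact hTS v hv w ⟨hwS.1, hNC ⟨w, hw, rfl⟩⟩ hvw.1
  have hcardX : (S \ T).ncard + N.ncard ≤ (Xset G Vp i).ncard := by
    rw [← Set.ncard_union_eq hNS]
    exact Set.ncard_le_ncard (Set.union_subset hST (hNC.trans (Cset'_subset_Xset i)))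
  have hcardS : S.ncard ≤ (S \ T).ncard + T.ncard :=
    (Set.ncard_le_ncard (by simp)).trans (Set.ncard_union_le _ _)
  have hd := indepDiff_le_critIndepDiff _ hT'indep
  unfold indepDiff at hd
  omega

end Splitting

namespace IsStarlikePartition

variable {G : SimpleGraph V} {t : ℕ} {Vp : Fin (t+1) → Set V}
  (hstar : IsStarlikePartition G t Vp)
include hstar

theorem isSimplicial_of_notMem_zero {v : V} (hv : v ∉ Vp 0) : IsSimplicial G v := by
  obtain ⟨i, hvi⟩ := hstar.covers v
  have hi : i ≠ 0 := by rintro rfl; exact hv hvi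
  have hout : ∀ a ∈ closedNbhd G v, a ∉ Vp i → ∀ u ∈ Vp i, a ≠ u → G.Adj u a :=
      fun a ha haV u hu hau => by
    have : a ∈ closedNbhd G u \ Vp i := by rw [hstar.nbhd_eq i hi u hu v hvi]; exact ⟨ha, haV⟩
    exact (mem_closedNbhd_iff.mp this.1).resolve_left hau
  intro a ha b hb hab
  by_cases haV : a ∈ Vp i <;> by_cases hbV : b ∈ Vp i
  · exact hstar.cliques i haV hbV hab
  · exact hout b hb hbV a haV hab.symm
  · exact (hout a ha haV b hbV hab).symm
  · exact hstar.cliques 0 (hstar.nbhd_sub i hi v hvi ⟨ha, haV⟩)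
      (hstar.nbhd_sub i hi v hvi ⟨hb, hbV⟩) hab

theorem Xset_eq_closedNbhd {i : Fin (t+1)} (hi : i ≠ 0) {u : V} (hu : u ∈ Vp i) :
    Xset G Vp i = closedNbhd G u := by
  rw [Xset, if_neg hi]
  ext x
  refine ⟨fun hx => ?_, fun hx => Set.mem_iUnion₂.mpr ⟨u, hu, hx⟩⟩
  obtain ⟨w, hw, hxw⟩ := Set.mem_iUnion₂.mp hx
  by_cases hxV : x ∈ Vp i
  · rcases eq_or_ne x u with rfl | hne
    · exact mem_closedNbhd_iff.mpr (Or.inl rfl)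
    · exact mem_closedNbhd_iff.mpr (Or.inr (hstar.cliques i hu hxV hne.symm))
  · have : x ∈ closedNbhd G u \ Vp i := by rw [hstar.nbhd_eq i hi u hu w hw]; exact ⟨hxw, hxV⟩
    exact this.1

theorem mem_Xset_self {i : Fin (t+1)} {u : V} (hu : u ∈ Vp i) : u ∈ Xset G Vp i := by
  rcases eq_or_ne i 0 with rfl | hi
  · rwa [Xset_zero]
  · rw [hstar.Xset_eq_closedNbhd hi hu]
    exact mem_closedNbhd_iff.mpr (Or.inl rfl)

theorem mem_or_mem_zero_of_adj {k : Fin (t+1)} (hk : k ≠ 0) {e w : V} (he : e ∈ Vp k)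
    (hew : G.Adj e w) : w ∈ Vp k ∨ w ∈ Vp 0 :=
  or_iff_not_imp_left.mpr fun hw =>
    hstar.nbhd_sub k hk e he ⟨mem_closedNbhd_iff.mpr (Or.inr hew), hw⟩

theorem mem_zero_of_mem_Cset' {i : Fin (t+1)} {x : V} (hx : x ∈ Cset' G Vp i) : x ∈ Vp 0 := by
  by_contra h
  exact hx.2 ⟨hx.1, hstar.isSimplicial_of_notMem_zero h⟩

theorem mem_Yset {i m : Fin (t+1)} {q : V} (hq : q ∈ Vp m) (hq0 : q ∉ Vp 0) (hmi : m ≠ i)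
    (hC' : Cset' G Vp m ⊆ Cset' G Vp i) : q ∈ Yset G Vp i :=
  Set.mem_iUnion₂.mpr
    ⟨m, ⟨hmi, hC'⟩, hstar.mem_Xset_self hq, hstar.isSimplicial_of_notMem_zero hq0⟩

variable {S : Set V}

theorem not_adj_of_mem_detachedPart {i : Fin (t+1)} {q w : V}
    (hq : q ∈ detachedPart G S (Vp 0)) (hw : w ∈ S ∩ Cset' G Vp i) : ¬ G.Adj q w :=
  hq.2 w ⟨hw.1, hstar.mem_zero_of_mem_Cset' hw.2⟩

theorem Cset'_subset_Cset'_zero (j : Fin (t+1)) : Cset' G Vp j ⊆ Cset' G Vp 0 := fun _ hx =>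
  ⟨Xset_zero (G := G) ▸ hstar.mem_zero_of_mem_Cset' hx, fun h => hx.2 ⟨hx.1, h.2⟩⟩

theorem detachedPart_subset_Yset_zero : detachedPart G S (Vp 0) ⊆ Yset G Vp 0 := by
  rintro q ⟨⟨-, hq0⟩, -⟩
  obtain ⟨m, hqm⟩ := hstar.covers q
  have hm : m ≠ 0 := by rintro rfl; exact hq0 hqm
  exact hstar.mem_Yset hqm hq0 hm (hstar.Cset'_subset_Cset'_zero m)

variable (hS : MConvexIndep G S)
include hS

theorem adj_of_adj_of_mem_zero {e p' p : V} (he : e ∈ S \ Vp 0) (hp' : p' ∈ S ∩ Vp 0)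
    (hep' : G.Adj e p') (hp : p ∈ S ∩ Vp 0) : G.Adj e p := by
  rcases eq_or_ne p' p with rfl | hne
  · exact hep'
  · exact hS.adj_of_adj_adj he.1 hp'.1 hp.1 (fun h => he.2 (h ▸ hp.2)) hep'
      (hstar.cliques 0 hp'.2 hp.2 hne)

variable {e₀ p₀ : V} (he₀ : e₀ ∈ S \ Vp 0) (hp₀ : p₀ ∈ S ∩ Vp 0) (he₀p₀ : G.Adj e₀ p₀)
  {k : Fin (t+1)} (he₀k : e₀ ∈ Vp k)
include he₀ hp₀ he₀p₀ he₀k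

theorem mem_of_adj_mem_zero {e p : V} (he : e ∈ S \ Vp 0) (hp : p ∈ S ∩ Vp 0)
    (hep : G.Adj e p) : e ∈ Vp k := by
  rcases eq_or_ne e₀ e with rfl | hne
  · exact he₀k
  have he₀e : G.Adj e₀ e := hS.adj_of_adj_adj he₀.1 hp₀.1 he.1 hne he₀p₀
    (hstar.adj_of_adj_of_mem_zero hS he hp hep hp₀).symm
  have hk : k ≠ 0 := by rintro rfl; exact he₀.2 he₀k
  exact (hstar.mem_or_mem_zero_of_adj hk he₀k he₀e).resolve_right he.2

theorem diff_detachedPart_subset_Xset : S \ detachedPart G S (Vp 0) ⊆ Xset G Vp k := by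
  have hk : k ≠ 0 := by rintro rfl; exact he₀.2 he₀k
  rintro s ⟨hs, hsT⟩
  by_cases hs0 : s ∈ Vp 0
  · rw [hstar.Xset_eq_closedNbhd hk he₀k]
    exact mem_closedNbhd_iff.mpr
      (Or.inr (hstar.adj_of_adj_of_mem_zero hS he₀ hp₀ he₀p₀ ⟨hs, hs0⟩))
  · have : ∃ p ∈ S ∩ Vp 0, G.Adj s p := by
      by_contra! h
      exact hsT ⟨⟨hs, hs0⟩, h⟩
    obtain ⟨p, hp, hsp⟩ := this
    exact hstar.mem_Xset_self
      (hstar.mem_of_adj_mem_zero hS he₀ hp₀ he₀p₀ he₀k ⟨hs, hs0⟩ hp hsp)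

theorem detachedPart_subset_Yset : detachedPart G S (Vp 0) ⊆ Yset G Vp k := by
  have hk : k ≠ 0 := by rintro rfl; exact he₀.2 he₀k
  have hXk := hstar.Xset_eq_closedNbhd hk he₀k
  rintro q ⟨hq, hqP⟩
  obtain ⟨m, hqm⟩ := hstar.covers q
  have hm : m ≠ 0 := by rintro rfl; exact hq.2 hqm
  have hXm := hstar.Xset_eq_closedNbhd hm hqm
  have hqp₀ : q ≠ p₀ := fun h => hq.2 (h ▸ hp₀.2)
  have hmk : m ≠ k := by
    rintro rfl
    have : p₀ ∈ closedNbhd G q := hXm ▸ hXk ▸ mem_closedNbhd_iff.mpr (Or.inr he₀p₀)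
    exact hqP p₀ hp₀ ((mem_closedNbhd_iff.mp this).resolve_left hqp₀.symm)
  have he₀q : ¬ G.Adj e₀ q := fun h =>
    hqP p₀ hp₀ (hS.adj_of_adj_adj hq.1 he₀.1 hp₀.1 hqp₀ h.symm he₀p₀)
  refine hstar.mem_Yset hqm hq.2 hmk fun y hy => ⟨?_, fun h => hy.2 ⟨hy.1, h.2⟩⟩
  have hy0 := hstar.mem_zero_of_mem_Cset' hy
  have hqy : G.Adj q y :=
    (mem_closedNbhd_iff.mp (hXm ▸ hy.1)).resolve_left fun h => hq.2 (h ▸ hy0)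
  -- otherwise `e₀ - p₀ - y - q` is an induced path with `e₀, p₀, q ∈ S`
  have he₀y : G.Adj e₀ y := hS.adj_of_adj_adj_adj he₀.1 hp₀.1 hq.1
    (fun h => he₀.2 (h ▸ hy0)) (fun h => hqP p₀ hp₀ (h ▸ he₀p₀)) hqp₀.symm he₀p₀
    (hstar.cliques 0 hp₀.2 hy0 fun h => hqP p₀ hp₀ (h ▸ hqy)) hqy.symm he₀q
    (fun h => hqP p₀ hp₀ h.symm)
  exact hXk ▸ mem_closedNbhd_iff.mpr (Or.inr he₀y)

end IsStarlikePartition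

/-- every m-convexly independent set `S` of a starlike graph satisfies
`|S| ≤ max_i (|X_i| + d_c(G_i))`. -/
theorem statement5 [Fintype V] (G : SimpleGraph V) (t : ℕ) (Vp : Fin (t+1) → Set V)
    (hstar : IsStarlikePartition G t Vp) (S : Set V) (hS : MConvexIndep G S) :
    (S.ncard : ℤ) ≤
      Finset.univ.sup' Finset.univ_nonempty
        (fun i : Fin (t+1) =>
          ((Xset G Vp i).ncard : ℤ) + critIndepDiff (Gsplit G Vp i)) := by
  obtain ⟨i, hTY, hSX⟩ : ∃ i, detachedPart G S (Vp 0) ⊆ Yset G Vp i ∧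
      S \ detachedPart G S (Vp 0) ⊆ Xset G Vp i := by
    by_cases h : ∃ e ∈ S \ Vp 0, ∃ p ∈ S ∩ Vp 0, G.Adj e p
    · obtain ⟨e, he, p, hp, hep⟩ := h
      obtain ⟨k, hek⟩ := hstar.covers e
      exact ⟨k, hstar.detachedPart_subset_Yset hS he hp hep hek,
        hstar.diff_detachedPart_subset_Xset hS he hp hep hek⟩
    · push Not at h
      exact ⟨0, hstar.detachedPart_subset_Yset_zero,
        Xset_zero (G := G) ▸ diff_detachedPart_subset h⟩
  exact Finset.le_sup'_of_le _ (Finset.mem_univ i) <| ncard_le_Xset_add_critIndepDiff hTY hSX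
    fun q hq w hw => hstar.not_adj_of_mem_detachedPart hq hw
end

section
/- Let G be a finite simple graph, T an independent set of G, v ∈ T, and y ∉ T a vertex adjacent to v with N[y] ⊆ N[v]. Then T' = (T − {v}) ∪ {y} is an independent set of G and d(T') ≥ d(T). -/
open SimpleGraph

variable {V : Type*}

/-! Because `T` is independent and contains `v`, the inclusion `N[y] ⊆ N[v]` forces `y` to have
no neighbour in `T − {v}`. Hence `T'` is independent, `|T'| = |T|`, and
`N(T') ⊆ (N(T) − {y}) ∪ {v}` where `y ∈ N(T)`, so `|N(T')| ≤ |N(T)|`. -/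

theorem Set.ncard_insert_diff_singleton_le {α : Type*} {s : Set α} {a b : α} (hb : b ∈ s)
    (hs : s.Finite) : (insert a (s \ {b})).ncard ≤ s.ncard :=
  (Set.ncard_insert_le a _).trans (Set.ncard_sdiff_singleton_add_one hb hs).le

section Exchange

variable {G : SimpleGraph V} {T : Set V} {u v y : V}

theorem mem_nbhdSet : u ∈ nbhdSet G T ↔ ∃ w ∈ T, G.Adj w u := by
  simp [nbhdSet]

theorem IsIndepSet'.not_adj_of_closedNbhd_subset (hT : IsIndepSet' G T) (hv : v ∈ T)
    (hN : closedNbhd G y ⊆ closedNbhd G v) (hu : u ∈ T) (huv : u ≠ v) : ¬ G.Adj u y := by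
  intro huy
  rcases hN (Set.mem_insert_of_mem y huy.symm) with rfl | hvu
  · exact huv rfl
  · exact hT v hv u hu hvu

theorem IsIndepSet'.exchange (hT : IsIndepSet' G T) (hv : v ∈ T)
    (hN : closedNbhd G y ⊆ closedNbhd G v) : IsIndepSet' G ((T \ {v}) ∪ {y}) := by
  rintro a (⟨ha, hav⟩ | rfl) b (⟨hb, hbv⟩ | rfl) hab
  · exact hT a ha b hb hab
  · exact hT.not_adj_of_closedNbhd_subset hv hN ha hav hab
  · exact hT.not_adj_of_closedNbhd_subset hv hN hb hbv hab.symm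
  · exact hab.ne rfl

theorem nbhdSet_exchange_subset (hT : IsIndepSet' G T) (hv : v ∈ T)
    (hN : closedNbhd G y ⊆ closedNbhd G v) :
    nbhdSet G ((T \ {v}) ∪ {y}) ⊆ insert v (nbhdSet G T \ {y}) := by
  intro w hw
  obtain ⟨u, (⟨hu, huv⟩ | rfl), huw⟩ := mem_nbhdSet.1 hw
  · refine Or.inr ⟨mem_nbhdSet.2 ⟨u, hu, huw⟩, ?_⟩
    rintro rfl
    exact hT.not_adj_of_closedNbhd_subset hv hN hu huv huw
  · rcases hN (Set.mem_insert_of_mem _ huw) with rfl | hvw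
    · exact Set.mem_insert _ _
    · exact Or.inr ⟨mem_nbhdSet.2 ⟨v, hv, hvw⟩, fun hwu => huw.ne hwu.symm⟩

theorem indepDiff_le_exchange [Finite V] (hT : IsIndepSet' G T) (hv : v ∈ T)
    (hadj : G.Adj v y) (hN : closedNbhd G y ⊆ closedNbhd G v) :
    indepDiff G T ≤ indepDiff G ((T \ {v}) ∪ {y}) := by
  have hyT : y ∉ T := fun hy => hT v hv y hy hadj
  have hcard : ((T \ {v}) ∪ {y}).ncard = T.ncard := by
    rw [Set.union_singleton]
    exact Set.ncard_exchange hyT hv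
  have hnbhd : (nbhdSet G ((T \ {v}) ∪ {y})).ncard ≤ (nbhdSet G T).ncard :=
    (Set.ncard_le_ncard (nbhdSet_exchange_subset hT hv hN) (Set.toFinite _)).trans
      (Set.ncard_insert_diff_singleton_le (mem_nbhdSet.2 ⟨v, hv, hadj⟩) (Set.toFinite _))
  unfold indepDiff
  omega

end Exchange

theorem statement13_general [Fintype V] (G : SimpleGraph V) (T : Set V)
    (hT : IsIndepSet' G T) (v y : V) (hv : v ∈ T)
    (hadj : G.Adj v y) (hN : closedNbhd G y ⊆ closedNbhd G v) :
    IsIndepSet' G ((T \ {v}) ∪ {y}) ∧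
    indepDiff G T ≤ indepDiff G ((T \ {v}) ∪ {y}) :=
  ⟨hT.exchange hv hN, indepDiff_le_exchange hT hv hadj hN⟩

/-- if `T` is independent, `v ∈ T`, `y ∉ T` is adjacent to `v` and
`N[y] ⊆ N[v]`, then `T' = (T − {v}) ∪ {y}` is independent and `d(T') ≥ d(T)`. -/
theorem statement13 [Fintype V] (G : SimpleGraph V) (T : Set V)
    (hT : IsIndepSet' G T) (v y : V) (hv : v ∈ T) (hy : y ∉ T)
    (hadj : G.Adj v y) (hN : closedNbhd G y ⊆ closedNbhd G v) :
    IsIndepSet' G ((T \ {v}) ∪ {y}) ∧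
    indepDiff G T ≤ indepDiff G ((T \ {v}) ∪ {y}) :=
  statement13_general G T hT v y hv hadj hN
end
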